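/- arXiv:1711.01688 — 7 statements merged into one kernel-verified Lean document; each statement's English description precedes it below -/
import Mathlib

section
/- A finite group G is autonilpotent if and only if G is nilpotent (equivalently, G is the internal direct product of its Sylow subgroups) and, for every prime p dividing |G|, the automorphism group Aut P of a Sylow p-subgroup P of G is a p-group. -/
/-- The autocommutator `[x, α] = x⁻¹ · α(x)`. -/
def autoComm {G : Type*} [Group G] (x : G) (α : MulAut G) : G := x⁻¹ * α x

/-- `autoL G n = Lₙ(G)`: elements `x` with `[x, α₁, …, αₙ] = 1` for all `α₁, …, αₙ ∈ Aut G`. -/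
def autoL (G : Type*) [Group G] (n : ℕ) : Set G :=
  {x | ∀ l : List (MulAut G), l.length = n → l.foldl autoComm x = 1}

/-- A group is autonilpotent if `G = Lₙ(G)` for some `n`. -/
def Autonilpotent (G : Type*) [Group G] : Prop := ∃ n : ℕ, ∀ x : G, x ∈ autoL G n

/-! Autonilpotent groups are nilpotent, since inner automorphisms turn autocommutators into
commutators. In a finite nilpotent group every Sylow subgroup `P` has a characteristic complement
(the product of the other Sylow subgroups), so automorphisms of `P` extend to `G`, and the
projections `G → P` commute with all automorphisms; hence `G` is autonilpotent iff all its Sylow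
subgroups are. Finally, a finite `p`-group `P` is autonilpotent iff `Aut P` is a `p`-group. If
`Aut P` is a `p`-group, so is the holomorph `P ⋊ Aut P`, which is therefore nilpotent, and
autocommutators of `P` are commutators in it. Conversely, let `β` have order `m` prime to `p`. If
`[x, β, β] = 1` then `w = [x, β]` is fixed by `β`, so `x = β ^ m x = x * w ^ m` and `w = 1`;
peeling off one step at a time, the Engel condition `[x, β, …, β] = 1` forces `β = 1`. -/

section Autocommutators

variable {G H : Type*} [Group G] [Group H]

@[simp] lemma autoComm_one (α : MulAut G) : autoComm (1 : G) α = 1 := by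
  simp [autoComm]

@[simp] lemma autoComm_eq_one_iff {x : G} {α : MulAut G} : autoComm x α = 1 ↔ α x = x := by
  rw [autoComm, inv_mul_eq_one, eq_comm]

@[simp] lemma foldl_autoComm_one (l : List (MulAut G)) : l.foldl autoComm (1 : G) = 1 := by
  induction l with
  | nil => rfl
  | cons α l ih => simpa using ih

lemma autoL_mono : Monotone (autoL G) := by
  intro m n hmn x hx l hl
  rw [← List.take_append_drop m l, List.foldl_append, hx _ (by simp [hl, hmn]),
    foldl_autoComm_one]

lemma map_foldl_autoComm (f : G →* H) (ρ : MulAut G → MulAut H)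
    (hρ : ∀ α x, f (α x) = ρ α (f x)) (x : G) (l : List (MulAut G)) :
    f (l.foldl autoComm x) = (l.map ρ).foldl autoComm (f x) := by
  induction l generalizing x with
  | nil => rfl
  | cons α l ih => simp [ih, autoComm, hρ]

end Autocommutators

section Nilpotent

open scoped commutatorElement

variable {G : Type*} [Group G]

lemma autoL_subset_upperCentralSeries (n : ℕ) :
    autoL G n ⊆ Subgroup.upperCentralSeries G n := by
  induction n with
  | zero => intro x hx; simpa using hx [] rfl
  | succ n ih =>
    intro x hx
    rw [SetLike.mem_coe, ← inv_mem_iff, Subgroup.mem_upperCentralSeries_succ_iff]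
    intro g
    have : autoComm x (MulAut.conj g) = ⁅x⁻¹, g⁆ := by
      simp [autoComm, commutatorElement_def, mul_assoc]
    rw [← this]
    exact ih fun l hl => hx (MulAut.conj g :: l) (by simp [hl])

theorem Autonilpotent.isNilpotent (hG : Autonilpotent G) : Group.IsNilpotent G := by
  obtain ⟨n, hn⟩ := hG
  exact (Group.isNilpotent_iff G).2
    ⟨n, eq_top_iff.2 fun x _ => autoL_subset_upperCentralSeries n (hn x)⟩

end Nilpotent

section Holomorph

open SemidirectProduct
open scoped commutatorElement

variable (H : Type*) [Group H]

abbrev Holomorph := H ⋊[MonoidHom.id (MulAut H)] MulAut H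

variable {H}

lemma inl_autoComm (x : H) (α : MulAut H) :
    (inl (autoComm x α) : Holomorph H) = ⁅(inl x⁻¹ : Holomorph H), inr α⁆ := by
  have : (inl (α x) : Holomorph H) = inr α * inl x * inr α⁻¹ := inl_aut α x
  simp [autoComm, commutatorElement_def, this, mul_assoc]

lemma mem_autoL_of_inl_mem_upperCentralSeries {n : ℕ} {x : H}
    (hx : (inl x : Holomorph H) ∈ Subgroup.upperCentralSeries (Holomorph H) n) :
    x ∈ autoL H n := by
  induction n generalizing x with
  | zero =>
    rintro l hl
    rw [List.length_eq_zero_iff.1 hl, List.foldl_nil]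
    exact (map_eq_one_iff _ inl_injective).1 (by simpa using hx)
  | succ n ih =>
    rintro (_ | ⟨α, l⟩) hl
    · simp at hl
    · have := Subgroup.mem_upperCentralSeries_succ_iff.1 (inv_mem hx) (inr α)
      rw [← map_inv, ← inl_autoComm] at this
      exact ih this l (by simpa using hl)

theorem Autonilpotent.of_isNilpotent_holomorph [Group.IsNilpotent (Holomorph H)] :
    Autonilpotent H := by
  obtain ⟨n, hn⟩ := (Group.isNilpotent_iff (Holomorph H)).1 ‹_›
  exact ⟨n, fun x => mem_autoL_of_inl_mem_upperCentralSeries (by simp [hn])⟩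

end Holomorph

section Engel

variable {P : Type*} [Group P] {p : ℕ}

lemma MulAut.eq_one_of_engel (hP : IsPGroup p P) {β : MulAut P} {m : ℕ} (hm : m.Coprime p)
    (hβ : β ^ m = 1) {n : ℕ} (hn : ∀ x : P, (List.replicate n β).foldl autoComm x = 1) :
    β = 1 := by
  have key : ∀ x : P, autoComm (autoComm x β) β = 1 → autoComm x β = 1 := by
    intro x hx
    set w := autoComm x β
    have hw : β w = w := autoComm_eq_one_iff.1 hx
    have hpow : ∀ j : ℕ, (β ^ j) x = x * w ^ j := by
      intro j
      induction j with
      | zero => simp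
      | succ j ih => rw [pow_succ', MulAut.mul_apply, ih, map_mul, map_pow, hw,
          show β x = x * w by simp [w, autoComm], mul_assoc, ← pow_succ']
    have hwm : w ^ m = 1 := by simpa [hβ] using hpow m
    obtain ⟨k, hk⟩ := hP w
    simpa [(hm.pow_right k).gcd_eq_one] using pow_gcd_eq_one.2 ⟨hwm, hk⟩
  have descend : ∀ k (x : P), (List.replicate (k + 1) β).foldl autoComm x = 1 →
      autoComm x β = 1 := by
    intro k
    induction k with
    | zero => simp
    | succ k ih => exact fun x hx => key x (ih _ hx)
  ext x
  have hx := descend n x (by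
    rw [List.replicate_succ', List.foldl_append, hn x]
    simp)
  exact autoComm_eq_one_iff.1 hx

lemma IsPGroup.of_forall_coprime_pow_eq_one [Finite P] [hp : Fact p.Prime]
    (h : ∀ a : P, ∀ m : ℕ, m.Coprime p → a ^ m = 1 → a = 1) : IsPGroup p P := by
  intro a
  refine ⟨(orderOf a).factorization p, h _ (orderOf a / p ^ (orderOf a).factorization p) ?_ ?_⟩
  · exact (Nat.coprime_ordCompl hp.out (orderOf_pos a).ne').symm
  · rw [← pow_mul, Nat.ordProj_mul_ordCompl_eq_self, pow_orderOf_eq_one]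

end Engel

theorem IsPGroup.autonilpotent_iff {P : Type*} [Group P] [Finite P] {p : ℕ} [Fact p.Prime]
    (hP : IsPGroup p P) : Autonilpotent P ↔ IsPGroup p (MulAut P) := by
  refine ⟨fun ⟨n, hn⟩ => ?_, fun hA => ?_⟩
  · exact IsPGroup.of_forall_coprime_pow_eq_one fun β m hm hβ =>
      MulAut.eq_one_of_engel hP hm hβ fun x => hn x _ List.length_replicate
  · obtain ⟨a, ha⟩ := IsPGroup.iff_card.1 hP
    obtain ⟨b, hb⟩ := IsPGroup.iff_card.1 hA
    have hcard : Nat.card (Holomorph P) = p ^ (a + b) := by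
      rw [SemidirectProduct.card, ha, hb, pow_add]
    have : Finite (Holomorph P) :=
      Nat.finite_of_card_ne_zero (hcard ▸ pow_ne_zero _ (Fact.out : p.Prime).ne_zero)
    have := (IsPGroup.of_card hcard).isNilpotent
    exact Autonilpotent.of_isNilpotent_holomorph

namespace Subgroup

variable {G : Type*} [Group G]

def Characteristic.mulAutRestrict (H : Subgroup G) [hH : H.Characteristic] (α : MulAut G) :
    MulAut H :=
  (α.subgroupMap H).trans (MulEquiv.subgroupCongr (characteristic_iff_map_eq.1 hH α))

@[simp] lemma Characteristic.coe_mulAutRestrict (H : Subgroup G) [H.Characteristic]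
    (α : MulAut G) (x : H) : (Characteristic.mulAutRestrict H α x : G) = α x := rfl

namespace IsComplement'

variable {H K : Subgroup G} [H.Normal] [K.Normal] (hHK : H.IsComplement' K)

noncomputable def prodMulEquiv : H × K ≃* G :=
  MulEquiv.ofBijective (MonoidHom.noncommCoprod H.subtype K.subtype fun a b =>
    commute_of_normal_of_disjoint H K ‹_› ‹_› hHK.disjoint a b a.2 b.2) hHK

@[simp] lemma prodMulEquiv_apply (a : H) (b : K) : hHK.prodMulEquiv (a, b) = (a : G) * b := rfl

lemma prodMulEquiv_symm_apply_left (a : H) : hHK.prodMulEquiv.symm a = (a, 1) := by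
  rw [MulEquiv.symm_apply_eq]; simp

lemma prodMulEquiv_symm_apply_right (b : K) : hHK.prodMulEquiv.symm b = (1, b) := by
  rw [MulEquiv.symm_apply_eq]; simp

theorem exists_mulAut_extension (hHK : H.IsComplement' K) (β : MulAut H) :
    ∃ α : MulAut G, ∀ a : H, α a = β a := by
  refine ⟨hHK.prodMulEquiv.symm.trans
    ((β.prodCongr (MulEquiv.refl K)).trans hHK.prodMulEquiv), fun a => ?_⟩
  rw [MulEquiv.trans_apply, MulEquiv.trans_apply, prodMulEquiv_symm_apply_left]
  exact (prodMulEquiv_apply hHK (β a) 1).trans (mul_one _)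

noncomputable def projection : G →* H :=
  (MonoidHom.fst H K).comp hHK.prodMulEquiv.symm.toMonoidHom

@[simp] lemma projection_coe_left (a : H) : hHK.projection a = a := by
  simp [projection, prodMulEquiv_symm_apply_left]

lemma projection_coe_right (b : K) : hHK.projection b = 1 := by
  simp [projection, prodMulEquiv_symm_apply_right]

lemma mem_right_of_projection_eq_one {x : G} (hx : hHK.projection x = 1) : x ∈ K := by
  obtain ⟨⟨a, b⟩, rfl⟩ := hHK.prodMulEquiv.surjective x
  obtain rfl : a = 1 := by
    simpa only [projection, MonoidHom.comp_apply, MulEquiv.coe_toMonoidHom,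
      MulEquiv.symm_apply_apply, MonoidHom.coe_fst] using hx
  simp

lemma projection_mulAut_apply [H.Characteristic] [K.Characteristic] (α : MulAut G) (x : G) :
    hHK.projection (α x) = Characteristic.mulAutRestrict H α (hHK.projection x) := by
  obtain ⟨⟨a, b⟩, rfl⟩ := hHK.prodMulEquiv.surjective x
  rw [prodMulEquiv_apply, map_mul, map_mul, map_mul, ← Characteristic.coe_mulAutRestrict H α a,
    ← Characteristic.coe_mulAutRestrict K α b, projection_coe_left, projection_coe_right,
    projection_coe_left, projection_coe_right]
  simp

end IsComplement'

end Subgroup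

theorem Autonilpotent.of_isComplement' {G : Type*} [Group G] {H K : Subgroup G} [H.Normal]
    [K.Normal] (hHK : H.IsComplement' K) (hG : Autonilpotent G) : Autonilpotent H := by
  obtain ⟨n, hn⟩ := hG
  choose ρ hρ using hHK.exists_mulAut_extension
  refine ⟨n, fun x l hl => Subtype.val_injective ?_⟩
  have := map_foldl_autoComm H.subtype ρ (fun β x => (hρ β x).symm) x l
  rw [Subgroup.coe_subtype] at this
  rw [this]
  exact hn x _ (by simpa using hl)

instance Nat.fact_prime_of_mem_primeFactors {n : ℕ} (q : n.primeFactors) : Fact (q : ℕ).Prime :=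
  ⟨Nat.prime_of_mem_primeFactors q.2⟩

namespace Sylow

variable {G : Type*} [Group G] [Finite G]

theorem iSup_eq_top (S : ∀ q : (Nat.card G).primeFactors, Sylow q G) :
    ⨆ q, (S q : Subgroup G) = ⊤ := by
  rw [← Subgroup.index_eq_one, Nat.eq_one_iff_not_exists_prime_dvd]
  intro r hr hdvd
  have hrG : r ∈ (Nat.card G).primeFactors :=
    Nat.mem_primeFactors.2 ⟨hr, hdvd.trans (Subgroup.index_dvd_card _), Nat.card_pos.ne'⟩
  have := Fact.mk hr
  exact (S ⟨r, hrG⟩).not_dvd_index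
    (hdvd.trans (Subgroup.index_dvd_of_le (le_iSup (fun q => (S q : Subgroup G)) ⟨r, hrG⟩)))

theorem iSupIndep_of_isNilpotent [Group.IsNilpotent G]
    (S : ∀ q : (Nat.card G).primeFactors, Sylow q G) : iSupIndep fun q => (S q : Subgroup G) := by
  have : ∀ q, Fintype (S q) := fun _ => Fintype.ofFinite _
  refine Subgroup.independent_of_coprime_order (fun q r hqr x y hx hy => ?_) fun q r hqr => ?_
  · exact Subgroup.commute_of_normal_of_disjoint _ _ inferInstance inferInstance
      (IsPGroup.disjoint_of_ne q r (Subtype.coe_injective.ne hqr) _ _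
        (S q).isPGroup' (S r).isPGroup') x y hx hy
  · simpa only [Fintype.card_eq_nat_card] using IsPGroup.coprime_card_of_ne q r
      (Subtype.coe_injective.ne hqr) _ _ (S q).isPGroup' (S r).isPGroup'

theorem exists_characteristic_isComplement' [Group.IsNilpotent G] {p : ℕ} [Fact p.Prime]
    (hp : p ∣ Nat.card G) (P : Sylow p G) :
    ∃ K : Subgroup G, K.Characteristic ∧ (P : Subgroup G).IsComplement' K := by
  let S : ∀ q : (Nat.card G).primeFactors, Sylow q G := default
  have : ∀ q, (S q : Subgroup G).Characteristic :=
    fun q => characteristic_of_normal _ inferInstance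
  let i : (Nat.card G).primeFactors :=
    ⟨p, Nat.mem_primeFactors.2 ⟨Fact.out, hp, Nat.card_pos.ne'⟩⟩
  have := unique_of_normal P inferInstance
  have hP : (P : Subgroup G) = S i := congrArg _ (Subsingleton.elim P (S i))
  refine ⟨⨆ (q) (_ : q ≠ i), (S q : Subgroup G), inferInstance, ?_⟩
  rw [hP]
  refine Subgroup.isComplement'_of_disjoint_and_mul_eq_univ (iSupIndep_of_isNilpotent S i) ?_
  rw [← Subgroup.normal_mul, ← iSup_split_single (fun q => (S q : Subgroup G)), iSup_eq_top]
  rfl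

theorem eq_one_of_forall_mem_isComplement' (S : ∀ q : (Nat.card G).primeFactors, Sylow q G)
    {K : (Nat.card G).primeFactors → Subgroup G}
    (hK : ∀ q, (S q : Subgroup G).IsComplement' (K q)) {x : G} (hx : ∀ q, x ∈ K q) :
    x = 1 := by
  rw [← orderOf_eq_one_iff, Nat.eq_one_iff_not_exists_prime_dvd]
  intro r hr hdvd
  have hrG : r ∈ (Nat.card G).primeFactors :=
    Nat.mem_primeFactors.2 ⟨hr, hdvd.trans (orderOf_dvd_natCard x), Nat.card_pos.ne'⟩
  have := Fact.mk hr
  apply (S ⟨r, hrG⟩).not_dvd_index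
  rw [(hK _).symm.index_eq_card]
  exact hdvd.trans (Subgroup.orderOf_dvd_natCard _ (hx _))

end Sylow

theorem Autonilpotent.of_jointly_injective {G ι : Type*} [Group G] [Finite ι] {H : ι → Type*}
    [∀ i, Group (H i)] (hH : ∀ i, Autonilpotent (H i)) (f : ∀ i, G →* H i)
    (ρ : ∀ i, MulAut G → MulAut (H i)) (hρ : ∀ i α x, f i (α x) = ρ i α (f i x))
    (hf : ∀ x, (∀ i, f i x = 1) → x = 1) : Autonilpotent G := by
  choose n hn using hH
  obtain ⟨N, hN⟩ := Finite.exists_le n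
  refine ⟨N, fun x l hl => hf _ fun i => ?_⟩
  rw [map_foldl_autoComm (f i) (ρ i) (hρ i)]
  exact autoL_mono (hN i) (hn i (f i x)) _ (by simpa using hl)

/-- A finite group `G` is autonilpotent iff `G` is nilpotent (the direct product of its Sylow
subgroups) and for every prime `p` dividing `|G|` the automorphism group of a Sylow
`p`-subgroup of `G` is a `p`-group. -/
theorem autonilpotent_iff_nilpotent_and_aut_sylow_pGroup (G : Type*) [Group G] [Finite G] :
    Autonilpotent G ↔
      Group.IsNilpotent G ∧
        ∀ p : ℕ, p.Prime → p ∣ Nat.card G →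
          ∀ P : Sylow p G, IsPGroup p (MulAut (P : Subgroup G)) := by
  refine ⟨fun hG => ⟨hG.isNilpotent, fun p hp hpG P => ?_⟩, fun ⟨hnil, hAut⟩ => ?_⟩
  · have := hG.isNilpotent
    have := Fact.mk hp
    obtain ⟨K, _, hK⟩ := P.exists_characteristic_isComplement' hpG
    exact P.isPGroup'.autonilpotent_iff.1 (hG.of_isComplement' hK)
  · let S : ∀ q : (Nat.card G).primeFactors, Sylow q G := default
    have : ∀ q, (S q : Subgroup G).Characteristic :=
      fun q => Sylow.characteristic_of_normal _ inferInstance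
    choose K _ hK using fun q =>
      (S q).exists_characteristic_isComplement' (Nat.dvd_of_mem_primeFactors q.2)
    refine Autonilpotent.of_jointly_injective (fun q => (S q).isPGroup'.autonilpotent_iff.2 ?_)
      (fun q => (hK q).projection) (fun q => Subgroup.Characteristic.mulAutRestrict _)
      (fun q => (hK q).projection_mulAut_apply) fun x hx =>
        Sylow.eq_one_of_forall_mem_isComplement' S hK fun q =>
          (hK q).mem_right_of_projection_eq_one (hx q)
    exact hAut q (Nat.prime_of_mem_primeFactors q.2) (Nat.dvd_of_mem_primeFactors q.2) (S q)
end

section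
/- Let R be a group of operators for a finite group G (R acts on G by automorphisms via φ : R → Aut G) such that conjugating any automorphism in the image φ(R) by any inner automorphism of G again yields an automorphism in φ(R) (i.e., Inn G ≤ N_{Aut G}(Aut_R G)). Then for every natural number n, Lₙ(G, R) = {x ∈ G : [x, r₁, …, rₙ] = 1 for all r₁, …, rₙ ∈ R} is a normal subgroup of G. -/
/-- The commutator `[x, r] = x⁻¹ · x^r` for an operator group acting via `φ : R →* Aut G`. -/
def opComm {R G : Type*} [Group R] [Group G] (φ : R →* MulAut G) (x : G) (r : R) : G :=
  x⁻¹ * φ r x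

/-- `opL φ n = Lₙ(G, R)`: elements `x` with `[x, r₁, …, rₙ] = 1` for all `r₁, …, rₙ ∈ R`. -/
def opL {R G : Type*} [Group R] [Group G] (φ : R →* MulAut G) (n : ℕ) : Set G :=
  {x | ∀ l : List R, l.length = n → l.foldl (opComm φ) x = 1}

lemma mem_opL_succ {R G : Type*} [Group R] [Group G] (φ : R →* MulAut G) (n : ℕ) (x : G) :
    x ∈ opL φ (n + 1) ↔ ∀ r : R, opComm φ x r ∈ opL φ n := by
  constructor
  · intro h r l hl
    exact h (r :: l) (by simp [hl])
  · intro h l hl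
    cases l with
    | nil => simp at hl
    | cons r l => exact h r l (by simpa using hl)

lemma opComm_one {R G : Type*} [Group R] [Group G] (φ : R →* MulAut G) (r : R) :
    opComm φ (1 : G) r = 1 := by simp [opComm]

lemma opComm_mul {R G : Type*} [Group R] [Group G] (φ : R →* MulAut G) (x y : G) (r : R) :
    opComm φ (x * y) r = y⁻¹ * opComm φ x r * y * opComm φ y r := by
  simp [opComm, mul_assoc]

lemma opComm_inv {R G : Type*} [Group R] [Group G] (φ : R →* MulAut G) (x : G) (r : R) :
    opComm φ x⁻¹ r = x * (opComm φ x r)⁻¹ * x⁻¹ := by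
  simp [opComm, mul_assoc]

/-- If `R` is a group of operators for a finite group `G` (acting via `φ : R →* Aut G`) with
`Inn G ≤ N_{Aut G}(Aut_R G)` (conjugating any automorphism of `φ(R)` by an inner automorphism
again lands in `φ(R)`), then `Lₙ(G, R)` is a normal subgroup of `G` for every `n`. -/
theorem opL_is_normal_subgroup (R G : Type*) [Group R] [Group G] [Finite R] [Finite G]
    (φ : R →* MulAut G)
    (hInn : ∀ (g : G) (r : R), MulAut.conj g * φ r * (MulAut.conj g)⁻¹ ∈ φ.range)
    (n : ℕ) :
    ∃ H : Subgroup G, H.Normal ∧ (H : Set G) = opL φ n := by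
  induction n with
  | zero =>
    refine ⟨⊥, inferInstance, ?_⟩
    ext x
    simp only [Subgroup.coe_bot, Set.mem_singleton_iff, opL, Set.mem_setOf_eq]
    constructor
    · rintro rfl l hl
      rw [List.length_eq_zero_iff] at hl
      subst hl; rfl
    · intro h
      simpa using h [] rfl
  | succ n ih =>
    obtain ⟨H, hN, hH⟩ := ih
    have hmem : ∀ z : G, z ∈ opL φ n ↔ z ∈ H := by
      intro z
      rw [← hH]; rfl
    refine ⟨{ carrier := opL φ (n + 1)
              one_mem' := ?_
              mul_mem' := ?_
              inv_mem' := ?_ }, ⟨?_⟩, rfl⟩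
    · -- mul_mem'
      intro x y hx hy
      have hx' := (mem_opL_succ φ n x).mp hx
      have hy' := (mem_opL_succ φ n y).mp hy
      show x * y ∈ opL φ (n + 1)
      rw [mem_opL_succ]
      intro r
      rw [opComm_mul, hmem]
      have h1 : opComm φ x r ∈ H := (hmem _).mp (hx' r)
      have h2 : opComm φ y r ∈ H := (hmem _).mp (hy' r)
      exact H.mul_mem (by simpa [mul_assoc] using hN.conj_mem' _ h1 y) h2
    · -- one_mem'
      show (1 : G) ∈ opL φ (n + 1)
      rw [mem_opL_succ]
      intro r
      rw [opComm_one, hmem]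
      exact H.one_mem
    · -- inv_mem'
      intro x hx
      have hx' := (mem_opL_succ φ n x).mp hx
      show x⁻¹ ∈ opL φ (n + 1)
      rw [mem_opL_succ]
      intro r
      rw [opComm_inv, hmem]
      have h1 : opComm φ x r ∈ H := (hmem _).mp (hx' r)
      exact hN.conj_mem _ (H.inv_mem h1) x
    · -- Normal
      intro x hx g
      have hx' := (mem_opL_succ φ n x).mp hx
      show g * x * g⁻¹ ∈ opL φ (n + 1)
      rw [mem_opL_succ]
      intro r
      obtain ⟨s, hs⟩ := hInn g⁻¹ r
      have key : opComm φ (g * x * g⁻¹) r = g * opComm φ x s * g⁻¹ := by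
        have h1 : φ s x = g⁻¹ * φ r (g * x * g⁻¹) * g := by
          rw [hs]
          simp [MulAut.mul_apply, MulAut.conj_apply, MulAut.conj_inv_apply, mul_assoc]
        have hr : φ r (g * x * g⁻¹) = g * φ s x * g⁻¹ := by
          rw [h1]; group
        simp only [opComm, hr]
        group
      rw [key, hmem]
      exact hN.conj_mem _ ((hmem _).mp (hx' s)) g
end

section
/- Let p be a prime, G a finite p-group, and R a group of operators for G. Then G is R-nilpotent if and only if Aut_R(G), the image of R in Aut G, is a p-group. -/
/-!
If `Kₙ(G, R) = 1` and `β ∈ Aut_R(G)` has order prime to `p`, then `β` acts trivially on every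
`Kₙ`, by descending induction: if `β` fixes `c = x⁻¹ · β x`, then `β ^ j x = x · c ^ j`, so `c`
has order dividing that of `β`, and `c = 1` because `G` is a `p`-group. Hence every element of
`Aut_R(G)` has `p`-power order. Conversely, if `A = Aut_R(G)` is a `p`-group then so is
`G ⋊ A`, which is therefore nilpotent, and `Kₙ(G, R)` lies in the `n`-th term of its lower
central series since `x⁻¹ · x^r` is a commutator in `G ⋊ A`.
-/

/-- `opK φ n = Kₙ(G, R)`: `K₀ = G`, `Kₙ₊₁ = [Kₙ, R]` is generated by the `[x, r] = x⁻¹ · x^r`,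
`x ∈ Kₙ(G, R)`, `r ∈ R`. -/
def opK {R G : Type*} [Group R] [Group G] (φ : R →* MulAut G) : ℕ → Subgroup G
  | 0 => ⊤
  | n + 1 => Subgroup.closure {y | ∃ x ∈ opK φ n, ∃ r : R, y = x⁻¹ * φ r x}

open SemidirectProduct
open scoped commutatorElement

theorem IsPGroup.of_eq_one_of_coprime_pow_eq_one {p : ℕ} (hp : p.Prime) {H : Type*} [Group H] [Finite H]
    (h : ∀ g : H, ∀ m : ℕ, p.Coprime m → g ^ m = 1 → g = 1) : IsPGroup p H := by
  intro g
  have hg : orderOf g ≠ 0 := (orderOf_pos g).ne'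
  refine ⟨(orderOf g).factorization p, h _ _ (Nat.coprime_ordCompl hp hg) ?_⟩
  rw [← pow_mul, Nat.ordProj_mul_ordCompl_eq_self, pow_orderOf_eq_one]

theorem IsPGroup.semidirectProduct {p : ℕ} {N G : Type*} [Group N] [Group G] {φ : G →* MulAut N}
    (hN : IsPGroup p N) (hG : IsPGroup p G) : IsPGroup p (N ⋊[φ] G) := by
  intro g
  obtain ⟨k, hk⟩ := hG g.right
  obtain ⟨j, hj⟩ := hN (g ^ p ^ k).left
  have hinl : g ^ p ^ k = inl (g ^ p ^ k).left := by
    ext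
    · rfl
    · rw [right_inl, ← rightHom_eq_right, map_pow, rightHom_eq_right, hk]
  exact ⟨k + j, by rw [pow_add, pow_mul, hinl, ← map_pow, hj, map_one]⟩

instance SemidirectProduct.instFinite {N G : Type*} [Group N] [Group G] {φ : G →* MulAut N}
    [Finite N] [Finite G] : Finite (N ⋊[φ] G) :=
  Finite.of_equiv _ equivProd.symm

theorem SemidirectProduct.inl_inv_mul_apply {N G : Type*} [Group N] [Group G] {φ : G →* MulAut N}
    (x : N) (g : G) : (inl (x⁻¹ * φ g x) : N ⋊[φ] G) = ⁅(inl x⁻¹ : N ⋊[φ] G), inr g⁆ := by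
  rw [commutatorElement_def, map_mul, inl_aut]
  simp only [map_inv]
  group

theorem MulAut.pow_apply_eq_mul_pow {G : Type*} [Group G] (β : MulAut G) {x : G}
    (hc : β (x⁻¹ * β x) = x⁻¹ * β x) (j : ℕ) : (β ^ j) x = x * (x⁻¹ * β x) ^ j := by
  induction j with
  | zero => simp
  | succ j ih =>
    rw [pow_succ', MulAut.mul_apply, ih, map_mul, map_pow, hc, pow_succ', ← mul_assoc,
      mul_inv_cancel_left]

theorem IsPGroup.apply_eq_self_of_commutator_fixed {p : ℕ} {G : Type*} [Group G]
    (hG : IsPGroup p G) {β : MulAut G} {m : ℕ} (hm : p.Coprime m) (hβ : β ^ m = 1) {x : G}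
    (hc : β (x⁻¹ * β x) = x⁻¹ * β x) : β x = x := by
  have hcm : (x⁻¹ * β x) ^ m = 1 ^ m := by
    simpa [hβ] using (β.pow_apply_eq_mul_pow hc m).symm
  rw [← mul_inv_cancel_left x (β x), (hG.powEquiv hm).injective hcm, mul_one]

section opK

variable {R G : Type*} [Group R] [Group G]

theorem inv_mul_apply_mem_opK_succ (φ : R →* MulAut G) {n : ℕ} {x : G} (hx : x ∈ opK φ n)
    (r : R) : x⁻¹ * φ r x ∈ opK φ (n + 1) :=
  Subgroup.subset_closure ⟨x, hx, r, rfl⟩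

theorem opK_comp_of_surjective {A : Type*} [Group A] (ψ : A →* MulAut G) {f : R →* A}
    (hf : Function.Surjective f) (n : ℕ) : opK (ψ.comp f) n = opK ψ n := by
  induction n with
  | zero => rfl
  | succ n ih => simp only [opK, ih, MonoidHom.comp_apply, hf.exists]

theorem opK_le_comap_lowerCentralSeries (φ : R →* MulAut G) (n : ℕ) :
    opK φ n ≤ ((⊤ : Subgroup (G ⋊[φ] R)).lowerCentralSeries n).comap inl := by
  induction n with
  | zero => exact fun _ _ => Subgroup.mem_top _
  | succ n ih =>
    refine (Subgroup.closure_le _).2 ?_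
    rintro _ ⟨x, hx, r, rfl⟩
    rw [SetLike.mem_coe, Subgroup.mem_comap, inl_inv_mul_apply]
    exact Subgroup.commutator_mem_commutator (inv_mem (ih hx)) (Subgroup.mem_top _)

theorem exists_opK_eq_bot_of_isNilpotent (φ : R →* MulAut G) [Group.IsNilpotent (G ⋊[φ] R)] :
    ∃ n, opK φ n = ⊥ := by
  obtain ⟨n, hn⟩ := Subgroup.nilpotent_iff_lowerCentralSeries.1 ‹Group.IsNilpotent (G ⋊[φ] R)›
  refine ⟨n, eq_bot_iff.2 fun x hx => ?_⟩
  have := opK_le_comap_lowerCentralSeries φ n hx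
  rw [Subgroup.mem_comap, hn, Subgroup.mem_bot] at this
  exact inl_injective (this.trans (map_one _).symm)

theorem IsPGroup.apply_eq_self_of_mem_opK {p : ℕ} (hG : IsPGroup p G) (φ : R →* MulAut G)
    {s : R} {m : ℕ} (hm : p.Coprime m) (hs : φ s ^ m = 1) {n k : ℕ} (hk : opK φ (n + k) = ⊥) :
    ∀ x ∈ opK φ n, φ s x = x := by
  induction k generalizing n with
  | zero =>
    intro x hx
    rw [add_zero] at hk
    rw [hk, Subgroup.mem_bot] at hx
    rw [hx, map_one]
  | succ k ih =>
    rw [← add_assoc, add_right_comm] at hk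
    exact fun x hx => hG.apply_eq_self_of_commutator_fixed hm hs
      (ih hk _ (inv_mul_apply_mem_opK_succ φ hx s))

theorem IsPGroup.range_of_opK_eq_bot [Finite G] {p : ℕ} (hp : p.Prime) (hG : IsPGroup p G)
    (φ : R →* MulAut G) {N : ℕ} (hN : opK φ N = ⊥) : IsPGroup p φ.range := by
  refine IsPGroup.of_eq_one_of_coprime_pow_eq_one hp ?_
  rintro ⟨_, s, rfl⟩ m hm hs
  have hs' : φ s ^ m = 1 := congrArg Subtype.val hs
  refine Subtype.ext (MulEquiv.ext fun x => ?_)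
  exact hG.apply_eq_self_of_mem_opK φ hm hs' (n := 0) (by rwa [zero_add]) x (Subgroup.mem_top x)

end opK

theorem pGroup_opNilpotent_iff_image_pGroup_general (p : ℕ) (hp : p.Prime) (R G : Type*) [Group R]
    [Group G] [Finite G] (hG : IsPGroup p G) (φ : R →* MulAut G) :
    (∃ n : ℕ, opK φ n = ⊥) ↔ IsPGroup p φ.range := by
  refine ⟨fun ⟨N, hN⟩ => hG.range_of_opK_eq_bot hp φ hN, fun hA => ?_⟩
  have : Fact p.Prime := ⟨hp⟩
  have := (hG.semidirectProduct hA (φ := φ.range.subtype)).isNilpotent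
  obtain ⟨n, hn⟩ := exists_opK_eq_bot_of_isNilpotent φ.range.subtype
  refine ⟨n, ?_⟩
  rw [← φ.subtype_comp_rangeRestrict, opK_comp_of_surjective _ φ.rangeRestrict_surjective, hn]

/-- A finite `p`-group `G` with operator group `R` (acting via `φ : R →* Aut G`) is
`R`-nilpotent iff `Aut_R G`, the image of `R` in `Aut G`, is a `p`-group. -/
theorem pGroup_opNilpotent_iff_image_pGroup (p : ℕ) (hp : p.Prime) (R G : Type*) [Group R]
    [Group G] [Finite R] [Finite G] (hG : IsPGroup p G) (φ : R →* MulAut G) :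
    (∃ n : ℕ, opK φ n = ⊥) ↔ IsPGroup p φ.range :=
  pGroup_opNilpotent_iff_image_pGroup_general p hp R G hG φ
end

section
/- Let p be a prime and let P be a finite p-group acting by automorphisms on a nontrivial finite p-group G. Then G has a P-admissible maximal subgroup, i.e., a maximal subgroup M of G such that x • M = M for all x ∈ P. -/
/-!
A nontrivial finite `p`-group has a normal subgroup of index `p`, so `Hom(G, ℤ/p)` is a
nontrivial `p`-group, on which `P` acts by precomposition. A `p`-group acting on a nontrivial
`p`-group fixes some nontrivial element `f`; the kernel of `f` has index `p`, so it is maximal,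
and it is `P`-invariant because `f` is.
-/

open MulAction

variable {p : ℕ}

theorem IsPGroup.domMulAct {P : Type*} [Group P] (hP : IsPGroup p P) : IsPGroup p Pᵈᵐᵃ :=
  fun g ↦ (hP (DomMulAct.mk.symm g)).imp fun _ hk ↦ congrArg DomMulAct.mk hk

theorem IsPGroup.monoidHom {G K : Type*} [Group G] [CommGroup K] [Finite K]
    (hK : IsPGroup p K) : IsPGroup p (G →* K) := by
  obtain ⟨n, hn⟩ := isPGroup_iff_exponent_dvd_pow.mp hK
  refine .of_exponent_dvd_pow (n := n) <| Monoid.exponent_dvd_of_forall_pow_eq_one fun f ↦ ?_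
  ext g
  exact Monoid.exponent_dvd_iff_forall_pow_eq_one.mp hn (f g)

theorem IsPGroup.exists_ne_one_mem_fixedPoints [Fact p.Prime] {P A : Type*} [Group P] [Group A]
    [MulDistribMulAction P A] [Finite A] [Nontrivial A] (hP : IsPGroup p P) (hA : IsPGroup p A) :
    ∃ a ∈ fixedPoints P A, a ≠ 1 := by
  have hpA : p ∣ Nat.card A := hA.card_eq_or_dvd.resolve_left Finite.one_lt_card.ne'
  obtain ⟨a, ha, hne⟩ := hP.exists_fixed_point_of_prime_dvd_card_of_fixed_point A hpA
    (a := 1) (smul_one ·)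
  exact ⟨a, ha, hne.symm⟩

theorem MonoidHom.isCoatom_ker_of_prime_card {G K : Type*} [Group G] [Group K]
    (hK : (Nat.card K).Prime) {f : G →* K} (hf : f ≠ 1) : IsCoatom f.ker := by
  have : Fact (Nat.card K).Prime := ⟨hK⟩
  have hsurj : Function.Surjective f := range_eq_top.mp <|
    f.range.eq_bot_or_eq_top_of_prime_card.resolve_left (range_eq_bot_iff.not.mpr hf)
  have hbot : IsCoatom (⊥ : Subgroup K) := by
    refine ⟨fun h ↦ hK.one_lt.ne' ?_,
      fun H hH ↦ H.eq_bot_or_eq_top_of_prime_card.resolve_left hH.ne'⟩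
    rw [← Subgroup.card_top, ← h, Subgroup.card_bot]
  simpa only [comap_bot] using Subgroup.isCoatom_comap_of_surjective hsurj hbot

theorem IsPGroup.exists_normal_index_eq [Fact p.Prime] {G : Type*} [Group G] [Finite G]
    [Nontrivial G] (hG : IsPGroup p G) : ∃ N : Subgroup G, N.Normal ∧ N.index = p := by
  obtain ⟨n, hn, hcard⟩ := hG.nontrivial_iff_card.mp ‹_›
  obtain ⟨m, rfl⟩ := Nat.exists_eq_succ_of_ne_zero hn.ne'
  obtain ⟨N, hN⟩ := Sylow.exists_subgroup_card_pow_prime p (hcard ▸ pow_dvd_pow p m.le_succ)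
  have hindex : N.index = p := by
    have := N.card_mul_index
    rw [hN, hcard, pow_succ] at this
    exact Nat.eq_of_mul_eq_mul_left (pow_pos (Fact.out : p.Prime).pos m) this
  refine ⟨N, Subgroup.normal_of_index_eq_minFac_card ?_, hindex⟩
  rw [hindex, hcard, (Fact.out : p.Prime).pow_minFac hn.ne']

theorem IsPGroup.nontrivial_monoidHom_zmod [Fact p.Prime] {G : Type*} [Group G] [Finite G]
    [Nontrivial G] (hG : IsPGroup p G) : Nontrivial (G →* Multiplicative (ZMod p)) := by
  obtain ⟨N, hN, hindex⟩ := hG.exists_normal_index_eq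
  let e : G ⧸ N ≃* Multiplicative (ZMod p) := mulEquivOfPrimeCardEq hindex (by simp)
  refine ⟨e.toMonoidHom.comp (QuotientGroup.mk' N), 1, fun h ↦ ?_⟩
  have : N = ⊤ := by simpa using congrArg MonoidHom.ker h
  exact (Fact.out : p.Prime).one_lt.ne' (hindex ▸ Subgroup.index_eq_one.mpr this)

theorem exists_admissible_maximal_subgroup_general (p : ℕ) (hp : p.Prime) (P G : Type*) [Group P]
    [Group G] [Finite G] [Nontrivial G] (hP : IsPGroup p P) (hG : IsPGroup p G)
    (φ : P →* MulAut G) :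
    ∃ M : Subgroup G, IsCoatom M ∧ ∀ x : P, M.map (φ x).toMonoidHom = M := by
  have : Fact p.Prime := ⟨hp⟩
  let := MulDistribMulAction.compHom G φ
  have hZ : Nat.card (Multiplicative (ZMod p)) = p := by simp
  have := hG.nontrivial_monoidHom_zmod
  have : Finite (G →* Multiplicative (ZMod p)) := Finite.of_injective _ DFunLike.coe_injective
  obtain ⟨f, hf_fixed, hf⟩ := hP.domMulAct.exists_ne_one_mem_fixedPoints
    (IsPGroup.monoidHom (G := G) (.of_card (n := 1) (hZ.trans (pow_one p).symm)))
  refine ⟨f.ker, f.isCoatom_ker_of_prime_card (hZ.symm ▸ hp) hf, fun x ↦ ?_⟩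
  -- `Pᵈᵐᵃ` acts on homomorphisms by precomposition: `DomMulAct.mk x • f = f.comp (φ x)`.
  have hfx : f.comp (φ x).toMonoidHom = f := hf_fixed (DomMulAct.mk x)
  calc f.ker.map (φ x).toMonoidHom = (f.ker.comap (φ x).toMonoidHom).map (φ x).toMonoidHom := by
        rw [MonoidHom.comap_ker, hfx]
    _ = f.ker := Subgroup.map_comap_eq_self_of_surjective (φ x).surjective _

/-- If a finite `p`-group `P` acts by automorphisms (via `φ : P →* Aut G`) on a nontrivial
finite `p`-group `G`, then `G` has a `P`-admissible maximal subgroup, i.e. a maximal subgroup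
`M` with `φ(x)(M) = M` for all `x ∈ P`. -/
theorem exists_admissible_maximal_subgroup (p : ℕ) (hp : p.Prime) (P G : Type*) [Group P]
    [Group G] [Finite P] [Finite G] [Nontrivial G] (hP : IsPGroup p P) (hG : IsPGroup p G)
    (φ : P →* MulAut G) :
    ∃ M : Subgroup G, IsCoatom M ∧ ∀ x : P, M.map (φ x).toMonoidHom = M :=
  exists_admissible_maximal_subgroup_general p hp P G hP hG φ
end

section
/- Let R be a group of operators for a finite group G such that every inner automorphism of G lies in the image of R in Aut G (Inn G ≤ Aut_R G). Then G is R-nilpotent if and only if G is nilpotent (equivalently, the internal direct product of its Sylow subgroups) and, for every prime p dividing |G| and every Sylow p-subgroup P of G, Aut_R(P) = N_R(P)/C_R(P) is a p-group, where N_R(P) = {r ∈ R : P^r = P} and C_R(P) = {r ∈ R : x^r = x for all x ∈ P}. -/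
open Pointwise

/-- `N_R(P) = {r ∈ R : P^r = P}`. -/
def opN {R G : Type*} [Group R] [Group G] (φ : R →* MulAut G) (P : Subgroup G) : Subgroup R :=
  Subgroup.comap φ (MulAction.stabilizer (MulAut G) P)

/-- `C_R(P) = {r ∈ R : x^r = x for all x ∈ P}`. -/
def opC {R G : Type*} [Group R] [Group G] (φ : R →* MulAut G) (P : Subgroup G) : Subgroup R :=
  Subgroup.comap φ (⨅ x ∈ (P : Set G), MulAction.stabilizer (MulAut G) x)

/-- `C_R(P)` is normal in `N_R(P)`, so the quotient group `Aut_R(P) = N_R(P)/C_R(P)` exists. -/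
instance opC_normal_in_opN {R G : Type*} [Group R] [Group G] (φ : R →* MulAut G)
    (P : Subgroup G) : ((opC φ P).subgroupOf (opN φ P)).Normal := by
  constructor
  intro β hβ α
  simp only [Subgroup.mem_subgroupOf, opC, Subgroup.mem_comap, Subgroup.mem_iInf,
    MulAction.mem_stabilizer_iff] at hβ ⊢
  intro x hx
  have hα : φ (α : R) • P = P := α.2
  have hx' : (φ (α : R))⁻¹ • x ∈ P := by
    rw [← Subgroup.mem_pointwise_smul_iff_inv_smul_mem, hα]
    exact hx
  have hfix := hβ _ hx'
  rw [Subgroup.coe_mul, Subgroup.coe_mul, Subgroup.coe_inv, map_mul, map_mul, map_inv]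
  rw [mul_smul, mul_smul, hfix, smul_inv_smul]

/-!
If `Kₙ(G, R) = 1`, then `Inn G ≤ Aut_R G` gives `γₙ₊₁(G) ≤ Kₙ(G, R)`, so `G` is nilpotent, and
every `r ∈ N_R(P)` stabilizes the chain `Kᵢ(G, R) ∩ P` of the `p`-group `P`, so that a `p`-power
of `r` centralizes `P`.

Conversely, the Sylow subgroups of a nilpotent `G` are characteristic, so `R` acts on each
Sylow `p`-subgroup `P` through the `p`-group `Aut_R(P)`. In the finite `p`-group
`P ⋊ Aut_R(P)`, which is nilpotent, `[P, R, …, R]` lies in the lower central series, hence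
vanishes. Since the `[P, R, …, R]` are normal and the Sylow subgroups generate `G`,
`Kₙ(G, R) ≤ ∏_P [P, R, …, R] = 1` for large `n`.
-/

section Series

variable {R G : Type*} [Group R] [Group G] (φ : R →* MulAut G)

/-- `[H, R, …, R]`, with `n` copies of `R`. -/
def opSeries (H : Subgroup G) : ℕ → Subgroup G
  | 0 => H
  | n + 1 => Subgroup.closure {y | ∃ x ∈ opSeries H n, ∃ r : R, y = x⁻¹ * φ r x}

theorem opK_eq_opSeries_top (n : ℕ) : opK φ n = opSeries φ ⊤ n := by
  induction n with
  | zero => rfl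
  | succ n ih => simp only [opK, opSeries, ih]

variable {φ} {H : Subgroup G}

theorem inv_mul_apply_mem_opSeries_succ {n : ℕ} {x : G} (hx : x ∈ opSeries φ H n) (r : R) :
    x⁻¹ * φ r x ∈ opSeries φ H (n + 1) :=
  Subgroup.subset_closure ⟨x, hx, r, rfl⟩

theorem opSeries_succ_le_iff {n : ℕ} {K : Subgroup G} :
    opSeries φ H (n + 1) ≤ K ↔ ∀ x ∈ opSeries φ H n, ∀ r : R, x⁻¹ * φ r x ∈ K := by
  refine (Subgroup.closure_le _).trans ⟨fun h x hx r => h ⟨x, hx, r, rfl⟩, ?_⟩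
  rintro h _ ⟨x, hx, r, rfl⟩
  exact h x hx r

theorem apply_mem_opSeries (hH : ∀ (r : R), ∀ x ∈ H, φ r x ∈ H) (n : ℕ) (r : R) {x : G}
    (hx : x ∈ opSeries φ H n) : φ r x ∈ opSeries φ H n := by
  induction n generalizing r x with
  | zero => exact hH r x hx
  | succ n ih =>
    refine opSeries_succ_le_iff (K := (opSeries φ H (n + 1)).comap (φ r).toMonoidHom).mpr
      (fun y hy s => ?_) hx
    have hconj : φ r (y⁻¹ * φ s y) = (φ r y)⁻¹ * φ (r * s * r⁻¹) (φ r y) := by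
      simp only [map_mul, map_inv, MulAut.mul_apply, MulAut.inv_apply,
        MulEquiv.symm_apply_apply]
    simpa only [Subgroup.mem_comap, MulEquiv.coe_toMonoidHom, hconj] using
      inv_mul_apply_mem_opSeries_succ (ih r hy) _

theorem opSeries_antitone (hH : ∀ (r : R), ∀ x ∈ H, φ r x ∈ H) : Antitone (opSeries φ H) :=
  antitone_nat_of_succ_le fun n => opSeries_succ_le_iff.mpr fun _ hx r =>
    mul_mem (inv_mem hx) (apply_mem_opSeries hH n r hx)

theorem opK_antitone : Antitone (opK φ) := by
  simpa only [funext (opK_eq_opSeries_top φ)] using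
    opSeries_antitone (φ := φ) fun _ _ _ => Subgroup.mem_top _

theorem opSeries_normal (hInn : ∀ g : G, MulAut.conj g ∈ φ.range)
    (hH : ∀ (r : R), ∀ x ∈ H, φ r x ∈ H) (n : ℕ) : (opSeries φ H n).Normal where
  conj_mem x hx g := by
    obtain ⟨r, hr⟩ := hInn g
    simpa only [hr, MulAut.conj_apply] using apply_mem_opSeries hH n r hx

end Series

section Stability

variable {G : Type*} [Group G]

theorem inv_mul_pow_apply_mem {H K : Subgroup G} {α : MulAut G} (hK : ∀ y ∈ K, α y ∈ K)
    (hHK : ∀ x ∈ H, x⁻¹ * α x ∈ K) {x : G} (hx : x ∈ H) (m : ℕ) : x⁻¹ * (α ^ m) x ∈ K := by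
  induction m with
  | zero => simp
  | succ m ih =>
    have h : x⁻¹ * (α ^ (m + 1)) x = (x⁻¹ * α x) * α (x⁻¹ * (α ^ m) x) := by
      rw [pow_succ', MulAut.mul_apply, map_mul, map_inv]
      group
    rw [h]
    exact mul_mem (hHK x hx) (hK _ ih)

theorem pow_card_apply_eq_self {K : Subgroup G} {β : MulAut G} (hβ : ∀ y ∈ K, β y = y)
    {x : G} (hx : x⁻¹ * β x ∈ K) : (β ^ Nat.card K) x = x := by
  set c := x⁻¹ * β x
  have hβx : β x = x * c := by simp only [c, mul_inv_cancel_left]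
  have hpow (m : ℕ) : (β ^ m) x = x * c ^ m := by
    induction m with
    | zero => simp
    | succ m ih =>
      rw [pow_succ', MulAut.mul_apply, ih, map_mul, map_pow, hβ c hx, hβx, pow_succ',
        mul_assoc]
  have hc : c ^ Nat.card K = 1 := congrArg Subtype.val (pow_card_eq_one' (x := ⟨c, hx⟩))
  rw [hpow, hc, mul_one]

theorem exists_pow_apply_eq_self_of_stabilizes [Finite G] {p : ℕ} [Fact p.Prime]
    {α : MulAut G} {Q : ℕ → Subgroup G} (hQ : Antitone Q) (hp : IsPGroup p (Q 0))
    (hα : ∀ i, ∀ x ∈ Q i, x⁻¹ * α x ∈ Q (i + 1)) {n : ℕ} (hn : Q n = ⊥) :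
    ∃ k : ℕ, ∀ x ∈ Q 0, (α ^ p ^ k) x = x := by
  induction n generalizing Q with
  | zero => exact ⟨0, fun x hx => by rw [hn, Subgroup.mem_bot] at hx; simp [hx]⟩
  | succ n ih =>
    have hp₁ : IsPGroup p (Q 1) := hp.to_le (hQ (Nat.zero_le 1))
    obtain ⟨k, hk⟩ := ih (Q := fun i => Q (i + 1)) (fun i j hij => hQ (Nat.succ_le_succ hij))
      hp₁ (fun i => hα (i + 1)) hn
    obtain ⟨e, he⟩ := IsPGroup.iff_card.mp hp₁
    have hQ₁ : ∀ y ∈ Q 1, α y ∈ Q 1 := fun y hy => by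
      simpa using mul_mem hy (hQ (Nat.le_succ 1) (hα 1 y hy))
    refine ⟨k + e, fun x hx => ?_⟩
    rw [pow_add, pow_mul, ← he]
    exact pow_card_apply_eq_self hk (inv_mul_pow_apply_mem hQ₁ (hα 0) hx _)

end Stability

section AutR

variable {R G : Type*} [Group R] [Group G] {φ : R →* MulAut G} {P : Subgroup G}

theorem mem_opC {r : R} : r ∈ opC φ P ↔ ∀ x ∈ P, φ r x = x := by
  simp [opC, MulAut.smul_def]

theorem apply_mem_of_mem_opN {r : R} (hr : r ∈ opN φ P) {x : G} (hx : x ∈ P) : φ r x ∈ P := by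
  have hr' : φ r • P = P := hr
  rw [← hr']
  exact Subgroup.smul_mem_pointwise_smul x (φ r) P hx

theorem mem_opN_of_characteristic [P.Characteristic] (r : R) : r ∈ opN φ P :=
  Subgroup.characteristic_iff_map_eq.mp ‹_› (φ r)

theorem isPGroup_autR_iff {p : ℕ} :
    IsPGroup p (opN φ P ⧸ (opC φ P).subgroupOf (opN φ P)) ↔
      ∀ r ∈ opN φ P, ∃ k : ℕ, ∀ x ∈ P, (φ r ^ p ^ k) x = x := by
  simp only [IsPGroup, QuotientGroup.mk_surjective.forall, ← QuotientGroup.mk_pow,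
    QuotientGroup.eq_one_iff, Subgroup.mem_subgroupOf, Subgroup.coe_pow, mem_opC, map_pow,
    Subtype.forall]

end AutR

section Forward

variable {R G : Type*} [Group R] [Group G] {φ : R →* MulAut G}

theorem lowerCentralSeries_le_opK (hInn : ∀ g : G, MulAut.conj g ∈ φ.range) (n : ℕ) :
    (⊤ : Subgroup G).lowerCentralSeries n ≤ opK φ n := by
  induction n with
  | zero => exact le_top
  | succ n ih =>
    refine Subgroup.commutator_le.mpr fun x hx g _ => ?_
    obtain ⟨r, hr⟩ := hInn g
    refine Subgroup.subset_closure ⟨x⁻¹, inv_mem (ih hx), r, ?_⟩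
    rw [hr, MulAut.conj_apply, commutatorElement_def]
    group

theorem isNilpotent_of_opK_eq_bot (hInn : ∀ g : G, MulAut.conj g ∈ φ.range) {n : ℕ}
    (hn : opK φ n = ⊥) : Group.IsNilpotent G :=
  Subgroup.nilpotent_iff_lowerCentralSeries.mpr
    ⟨n, eq_bot_iff.mpr (hn ▸ lowerCentralSeries_le_opK hInn n)⟩

theorem isPGroup_autR_of_opK_eq_bot [Finite G] {n : ℕ} (hn : opK φ n = ⊥) {p : ℕ}
    [Fact p.Prime] {P : Subgroup G} (hP : IsPGroup p P) :
    IsPGroup p (opN φ P ⧸ (opC φ P).subgroupOf (opN φ P)) := by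
  refine isPGroup_autR_iff.mpr fun r hr => ?_
  obtain ⟨k, hk⟩ := exists_pow_apply_eq_self_of_stabilizes (α := φ r)
    (Q := fun i => opK φ i ⊓ P) (fun i j hij => inf_le_inf_right P (opK_antitone hij))
    (hP.to_le inf_le_right)
    (fun i x hx => by
      obtain ⟨hxK, hxP⟩ := Subgroup.mem_inf.mp hx
      exact Subgroup.mem_inf.mpr ⟨Subgroup.subset_closure ⟨x, hxK, r, rfl⟩,
        mul_mem (inv_mem hxP) (apply_mem_of_mem_opN hr hxP)⟩)
    (show opK φ n ⊓ P = ⊥ by rw [hn, bot_inf_eq])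
  exact ⟨k, fun x hx => hk x ⟨Subgroup.mem_top x, hx⟩⟩

end Forward

section Reverse

open SemidirectProduct
open scoped commutatorElement

theorem exists_opK_eq_bot_of_isPGroup {p : ℕ} [Fact p.Prime] {A P : Type*} [Group A] [Group P]
    [Finite A] [Finite P] (ψ : A →* MulAut P) (hA : IsPGroup p A) (hP : IsPGroup p P) :
    ∃ n, opK ψ n = ⊥ := by
  have : Finite (P ⋊[ψ] A) := Finite.of_equiv _ equivProd.symm
  have hW : IsPGroup p (P ⋊[ψ] A) := by
    obtain ⟨a, ha⟩ := IsPGroup.iff_card.mp hP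
    obtain ⟨b, hb⟩ := IsPGroup.iff_card.mp hA
    exact IsPGroup.iff_card.mpr ⟨a + b, by rw [card, ha, hb, pow_add]⟩
  obtain ⟨n, hn⟩ := Subgroup.nilpotent_iff_lowerCentralSeries.mp hW.isNilpotent
  have hmap (i : ℕ) : (opK ψ i).map inl ≤ (⊤ : Subgroup (P ⋊[ψ] A)).lowerCentralSeries i := by
    induction i with
    | zero => exact le_top
    | succ i ih =>
      refine Subgroup.map_le_iff_le_comap.mpr ((Subgroup.closure_le _).mpr ?_)
      rintro _ ⟨x, hx, a, rfl⟩
      have hcomm : inl (x⁻¹ * ψ a x) = ⁅(inl x : P ⋊[ψ] A)⁻¹, (inr a : P ⋊[ψ] A)⁆ := by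
        rw [map_mul, map_inv, inl_aut, commutatorElement_def, inv_inv, map_inv]
        group
      rw [SetLike.mem_coe, Subgroup.mem_comap, hcomm]
      exact Subgroup.commutator_mem_commutator (inv_mem (ih ⟨x, hx, rfl⟩)) (Subgroup.mem_top _)
  refine ⟨n, (Subgroup.map_eq_bot_iff_of_injective _ (inl_injective (φ := ψ))).mp ?_⟩
  exact eq_bot_iff.mpr (hn ▸ hmap n)

variable {R G : Type*} [Group R] [Group G] {φ : R →* MulAut G}

theorem opSeries_le_map_opK {H : Subgroup G} {A : Type*} [Group A] (ψ : A →* MulAut H)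
    (f : R → A) (hf : ∀ (r : R) (x : H), (ψ (f r) x : G) = φ r x) (n : ℕ) :
    opSeries φ H n ≤ (opK ψ n).map H.subtype := by
  induction n with
  | zero => exact (Subgroup.range_subtype H).ge.trans (MonoidHom.range_eq_map _).le
  | succ n ih =>
    refine opSeries_succ_le_iff.mpr fun x hx r => ?_
    obtain ⟨y, hy, rfl⟩ := ih hx
    refine ⟨y⁻¹ * ψ (f r) y, Subgroup.subset_closure ⟨y, hy, f r, rfl⟩, ?_⟩
    simp [hf]

theorem exists_opSeries_eq_bot_of_isPGroup_autR [Finite G] {p : ℕ} [Fact p.Prime]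
    {P : Subgroup G} [P.Characteristic] (hP : IsPGroup p P)
    (hAut : IsPGroup p (opN φ P ⧸ (opC φ P).subgroupOf (opN φ P))) :
    ∃ n, opSeries φ P n = ⊥ := by
  set ρ := (MulAut.characteristic P).comp φ
  have hρ : IsPGroup p ρ.range := by
    rintro ⟨_, r, rfl⟩
    obtain ⟨k, hk⟩ := isPGroup_autR_iff.mp hAut r (mem_opN_of_characteristic r)
    refine ⟨k, Subtype.ext ?_⟩
    rw [Subgroup.coe_pow, ← map_pow]
    refine MulEquiv.ext fun x => Subtype.ext ?_
    show φ (r ^ p ^ k) x = x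
    rw [map_pow]
    exact hk x x.2
  obtain ⟨n, hn⟩ := exists_opK_eq_bot_of_isPGroup ρ.range.subtype hρ hP
  refine ⟨n, eq_bot_iff.mpr ?_⟩
  simpa [hn] using opSeries_le_map_opK ρ.range.subtype ρ.rangeRestrict (fun _ _ => rfl) n

end Reverse

section Sylow

variable {R G : Type*} [Group R] [Group G] {φ : R →* MulAut G}

theorem opSeries_iSup_le {ι : Sort*} (hInn : ∀ g : G, MulAut.conj g ∈ φ.range)
    {H : ι → Subgroup G} (hH : ∀ i (r : R), ∀ x ∈ H i, φ r x ∈ H i) (n : ℕ) :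
    opSeries φ (⨆ i, H i) n ≤ ⨆ i, opSeries φ (H i) n := by
  induction n with
  | zero => exact le_rfl
  | succ n ih =>
    have := fun i => opSeries_normal hInn (hH i) (n + 1)
    refine opSeries_succ_le_iff.mpr fun x hx r => ?_
    refine Subgroup.iSup_induction _ (C := fun x => x⁻¹ * φ r x ∈ ⨆ i, opSeries φ (H i) (n + 1))
      (ih hx) (fun i y hy => Subgroup.mem_iSup_of_mem i (inv_mul_apply_mem_opSeries_succ hy r))
      (by simp) (fun u v hu hv => ?_)
    have h : (u * v)⁻¹ * φ r (u * v) = v⁻¹ * (u⁻¹ * φ r u) * v⁻¹⁻¹ * (v⁻¹ * φ r v) := by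
      rw [map_mul]
      group
    rw [h]
    exact mul_mem ((Subgroup.iSup_normal _).conj_mem _ hu v⁻¹) hv

theorem iSup_sylow_eq_top [Finite G] (S : ∀ p : (Nat.card G).primeFactors, Sylow p G) :
    ⨆ p, (S p : Subgroup G) = ⊤ := by
  rw [← Subgroup.index_eq_one, Nat.eq_one_iff_not_exists_prime_dvd]
  intro q hq hdvd
  have hq' : q ∈ (Nat.card G).primeFactors :=
    Nat.mem_primeFactors.mpr ⟨hq, hdvd.trans (Subgroup.index_dvd_card _), Nat.card_pos.ne'⟩
  have := Fact.mk hq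
  have hle : (S ⟨q, hq'⟩ : Subgroup G) ≤ ⨆ p, (S p : Subgroup G) :=
    le_iSup (fun p => (S p : Subgroup G)) ⟨q, hq'⟩
  exact (S ⟨q, hq'⟩).not_dvd_index (hdvd.trans (Subgroup.index_dvd_of_le hle))

theorem exists_opK_eq_bot_of_sylow [Finite G] [Group.IsNilpotent G]
    (hInn : ∀ g : G, MulAut.conj g ∈ φ.range)
    (hSyl : ∀ p : ℕ, p.Prime → p ∣ Nat.card G → ∀ P : Sylow p G,
      IsPGroup p (opN φ P ⧸ (opC φ P).subgroupOf (opN φ P))) :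
    ∃ n, opK φ n = ⊥ := by
  have hp (p : (Nat.card G).primeFactors) : Fact (p : ℕ).Prime :=
    ⟨Nat.prime_of_mem_primeFactors p.2⟩
  let S (p : (Nat.card G).primeFactors) : Sylow p G := default
  have hchar (p : (Nat.card G).primeFactors) : (S p : Subgroup G).Characteristic :=
    Sylow.characteristic_of_normal _ inferInstance
  have hinv (p : (Nat.card G).primeFactors) (r : R) : ∀ x ∈ (S p : Subgroup G), φ r x ∈ S p :=
    fun _ => apply_mem_of_mem_opN (mem_opN_of_characteristic r)
  have hbot (p : (Nat.card G).primeFactors) : ∃ n, opSeries φ (S p) n = ⊥ :=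
    exists_opSeries_eq_bot_of_isPGroup_autR (S p).isPGroup'
      (hSyl p (Nat.prime_of_mem_primeFactors p.2) (Nat.dvd_of_mem_primeFactors p.2) (S p))
  choose m hm using hbot
  refine ⟨Finset.univ.sup m, eq_bot_iff.mpr ?_⟩
  rw [opK_eq_opSeries_top, ← iSup_sylow_eq_top S]
  refine (opSeries_iSup_le hInn hinv _).trans (iSup_le fun p => ?_)
  exact (opSeries_antitone (hinv p) (Finset.le_sup (Finset.mem_univ p))).trans (hm p).le

end Sylow

theorem opNilpotent_iff_nilpotent_and_sylow_condition_general (R G : Type*) [Group R] [Group G]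
    [Finite G] (φ : R →* MulAut G) (hInn : ∀ g : G, MulAut.conj g ∈ φ.range) :
    (∃ n : ℕ, opK φ n = ⊥) ↔
      Group.IsNilpotent G ∧
        ∀ p : ℕ, p.Prime → p ∣ Nat.card G → ∀ P : Sylow p G,
          IsPGroup p (↥(opN φ (P : Subgroup G)) ⧸
            (opC φ (P : Subgroup G)).subgroupOf (opN φ (P : Subgroup G))) := by
  constructor
  · rintro ⟨n, hn⟩
    refine ⟨isNilpotent_of_opK_eq_bot hInn hn, fun p hp _ P => ?_⟩
    have := Fact.mk hp
    exact isPGroup_autR_of_opK_eq_bot hn P.isPGroup'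
  · rintro ⟨hG, hSyl⟩
    exact exists_opK_eq_bot_of_sylow hInn hSyl

/-- Let `R` be a group of operators for a finite group `G` (acting via `φ : R →* Aut G`) such
that every inner automorphism of `G` lies in `φ(R)`. Then `G` is `R`-nilpotent iff `G` is
nilpotent (the direct product of its Sylow subgroups) and `Aut_R(P) = N_R(P)/C_R(P)` is a
`p`-group for every prime `p` dividing `|G|` and every Sylow `p`-subgroup `P` of `G`. -/
theorem opNilpotent_iff_nilpotent_and_sylow_condition (R G : Type*) [Group R] [Group G]
    [Finite R] [Finite G] (φ : R →* MulAut G) (hInn : ∀ g : G, MulAut.conj g ∈ φ.range) :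
    (∃ n : ℕ, opK φ n = ⊥) ↔
      Group.IsNilpotent G ∧
        ∀ p : ℕ, p.Prime → p ∣ Nat.card G → ∀ P : Sylow p G,
          IsPGroup p (↥(opN φ (P : Subgroup G)) ⧸
            (opC φ (P : Subgroup G)).subgroupOf (opN φ (P : Subgroup G))) :=
  opNilpotent_iff_nilpotent_and_sylow_condition_general R G φ hInn
end

section
/- Let R be a group of operators for a finite group G such that conjugating any automorphism in the image of R in Aut G by any inner automorphism of G again yields an automorphism in that image (Inn G ≤ N_{Aut G}(Aut_R G)). If Lₙ(G, R) = G for some natural number n, then K_i(G, R) ≤ L_{n−i}(G, R) for every 0 ≤ i ≤ n; in particular Kₙ(G, R) = 1. -/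
section aux
variable {R G : Type*} [Group R] [Group G] (φ : R →* MulAut G)

lemma opComm_conj
    (hInn : ∀ (g : G) (r : R), MulAut.conj g * φ r * (MulAut.conj g)⁻¹ ∈ φ.range)
    (g : G) (r : R) : ∃ r' : R, ∀ z : G,
      opComm φ (g⁻¹ * z * g) r = g⁻¹ * opComm φ z r' * g := by
  obtain ⟨r', hr'⟩ := hInn g r
  refine ⟨r', fun z => ?_⟩
  have h2 : (MulAut.conj g)⁻¹ = MulAut.conj g⁻¹ := by rw [← map_inv]
  have h : φ r' z = g * φ r (g⁻¹ * z * g) * g⁻¹ := by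
    rw [hr', h2]
    simp [mul_assoc]
  simp only [opComm, h]
  group

lemma foldl_conj
    (hInn : ∀ (g : G) (r : R), MulAut.conj g * φ r * (MulAut.conj g)⁻¹ ∈ φ.range)
    (l : List R) : ∀ (x g : G), ∃ l' : List R, l'.length = l.length ∧
      l.foldl (opComm φ) (g⁻¹ * x * g) = g⁻¹ * l'.foldl (opComm φ) x * g := by
  induction l with
  | nil => exact fun x g => ⟨[], rfl, rfl⟩
  | cons r t ih =>
    intro x g
    obtain ⟨r', hr'⟩ := opComm_conj φ hInn g r
    obtain ⟨t', hlen, heq⟩ := ih (opComm φ x r') g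
    exact ⟨r' :: t', by simp [hlen], by simp [hr' x, heq]⟩

lemma opL_conj
    (hInn : ∀ (g : G) (r : R), MulAut.conj g * φ r * (MulAut.conj g)⁻¹ ∈ φ.range)
    (m : ℕ) (x : G) (hx : x ∈ opL φ m) (g : G) : g⁻¹ * x * g ∈ opL φ m := by
  intro l hl
  obtain ⟨l', hlen, heq⟩ := foldl_conj φ hInn l x g
  rw [heq, hx l' (hlen.trans hl)]
  group

lemma opL_zero (x : G) : x ∈ opL φ 0 ↔ x = 1 := by
  constructor
  · intro h; simpa using h [] rfl
  · rintro rfl l hl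
    rw [List.length_eq_zero_iff] at hl
    subst hl; rfl

lemma opL_succ (m : ℕ) (x : G) :
    x ∈ opL φ (m + 1) ↔ ∀ r : R, opComm φ x r ∈ opL φ m := by
  constructor
  · intro h r t ht
    exact h (r :: t) (by simp [ht])
  · intro h l hl
    cases l with
    | nil => simp at hl
    | cons r t => exact h r t (by simpa using hl)

lemma opL_mul_inv
    (hInn : ∀ (g : G) (r : R), MulAut.conj g * φ r * (MulAut.conj g)⁻¹ ∈ φ.range) :
    ∀ m : ℕ, (∀ x y : G, x ∈ opL φ m → y ∈ opL φ m → x * y ∈ opL φ m) ∧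
      (∀ x : G, x ∈ opL φ m → x⁻¹ ∈ opL φ m) := by
  intro m
  induction m with
  | zero =>
    constructor
    · intro x y hx hy
      rw [opL_zero] at *
      rw [hx, hy, one_mul]
    · intro x hx
      rw [opL_zero] at *
      rw [hx, inv_one]
  | succ m ih =>
    constructor
    · intro x y hx hy
      rw [opL_succ] at *
      intro r
      have hxy : opComm φ (x * y) r = (y⁻¹ * opComm φ x r * y) * opComm φ y r := by
        simp only [opComm]
        group
        simp [mul_assoc]
      rw [hxy]
      exact ih.1 _ _ (opL_conj φ hInn m _ (hx r) y) (hy r)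
    · intro x hx
      rw [opL_succ] at *
      intro r
      have hxi : opComm φ x⁻¹ r = (x⁻¹)⁻¹ * (opComm φ x r)⁻¹ * x⁻¹ := by
        simp only [opComm, map_inv]
        group
      rw [hxi]
      exact opL_conj φ hInn m _ (ih.2 _ (hx r)) x⁻¹

lemma opL_one_mem (m : ℕ) : (1 : G) ∈ opL φ m := by
  induction m with
  | zero => exact (opL_zero φ 1).2 rfl
  | succ m ih =>
    rw [opL_succ]
    intro r
    have : opComm φ (1 : G) r = 1 := by simp [opComm]
    rw [this]; exact ih

def opLSubgroup
    (hInn : ∀ (g : G) (r : R), MulAut.conj g * φ r * (MulAut.conj g)⁻¹ ∈ φ.range)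
    (m : ℕ) : Subgroup G where
  carrier := opL φ m
  one_mem' := opL_one_mem φ m
  mul_mem' := fun ha hb => (opL_mul_inv φ hInn m).1 _ _ ha hb
  inv_mem' := fun ha => (opL_mul_inv φ hInn m).2 _ ha

end aux

/-- Let `R` be a group of operators for a finite group `G` (acting via `φ : R →* Aut G`) such
that conjugating any automorphism of `φ(R)` by any inner automorphism of `G` again lands in
`φ(R)`. If `Lₙ(G, R) = G` then `K_i(G, R) ≤ L_{n-i}(G, R)` for all `0 ≤ i ≤ n`; in
particular `Kₙ(G, R) = 1`. -/
theorem opK_le_opL_of_opL_eq_top (R G : Type*) [Group R] [Group G] [Finite R] [Finite G]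
    (φ : R →* MulAut G)
    (hInn : ∀ (g : G) (r : R), MulAut.conj g * φ r * (MulAut.conj g)⁻¹ ∈ φ.range)
    (n : ℕ) (hL : ∀ x : G, x ∈ opL φ n) :
    (∀ i : ℕ, i ≤ n → ∀ x ∈ opK φ i, x ∈ opL φ (n - i)) ∧ opK φ n = ⊥ := by
  have main : ∀ i : ℕ, i ≤ n → ∀ x ∈ opK φ i, x ∈ opL φ (n - i) := by
    intro i
    induction i with
    | zero => intro _ x _; simpa using hL x
    | succ i ih =>
      intro hin x hx
      have hi : i ≤ n := Nat.le_of_succ_le hin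
      have hstep : n - i = (n - (i + 1)) + 1 := by omega
      have hsub : {y | ∃ x ∈ opK φ i, ∃ r : R, y = x⁻¹ * φ r x} ⊆
          (opLSubgroup φ hInn (n - (i + 1)) : Set G) := by
        rintro y ⟨z, hz, r, rfl⟩
        have hzL : z ∈ opL φ (n - i) := ih hi z hz
        rw [hstep] at hzL
        exact (opL_succ φ _ z).1 hzL r
      have := (Subgroup.closure_le (opLSubgroup φ hInn (n - (i + 1)))).2 hsub
      exact this hx
  refine ⟨main, ?_⟩
  rw [eq_bot_iff]
  intro x hx
  have := main n le_rfl x hx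
  rw [Nat.sub_self, opL_zero] at this
  simpa using this
end

section
/- Let R be a group of operators for a finite group G such that every inner automorphism of G lies in the image of R in Aut G (Inn G ≤ Aut_R G). Then the absolute R-hypercenter L_∞(G, R) is a nilpotent normal subgroup of G. -/
/-!
Work in `S = G ⋊ R`. There `[x, r]` is the group commutator
`(inl x)⁻¹ (inr r⁻¹)⁻¹ (inl x) (inr r⁻¹)`, and since `Inn G ≤ φ(R)`, conjugation by any element
of `S` acts on `G` as some `φ r`. Hence, by induction on `n`, `Lₙ(G, R)` is the preimage in `G` of
the `n`-th centre `Zₙ(S)`. These preimages form an increasing chain of normal subgroups of the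
finite group `G`, so they stabilise at some `N`, and `L_∞(G, R)` embeds in `Z_N(S)`, which is
nilpotent.
-/

namespace Subgroup

variable {K : Type*} [Group K]

theorem isNilpotent_of_le_upperCentralSeries {H : Subgroup K} {n : ℕ}
    (hH : H ≤ upperCentralSeries K n) : Group.IsNilpotent H := by
  rw [nilpotent_iff_finite_ascending_central_series]
  refine ⟨n, fun i => (upperCentralSeries K i).subgroupOf H, ⟨?_, ?_⟩, ?_⟩
  · simp only [upperCentralSeries_zero, bot_subgroupOf]
  · intro x i hx g
    simpa [mem_subgroupOf, commutatorElement_def] using mem_upperCentralSeries_succ_iff.mp hx g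
  · exact subgroupOf_eq_top.mpr hH

theorem isNilpotent_comap_upperCentralSeries {G : Type*} [Group G] {f : G →* K}
    (hf : Function.Injective f) (n : ℕ) : Group.IsNilpotent ((upperCentralSeries K n).comap f) :=
  (Group.isNilpotent_congr (equivMapOfInjective _ f hf)).mpr
    (isNilpotent_of_le_upperCentralSeries (map_comap_le _ _))

theorem mem_upperCentralSeries_succ_iff_inv {n : ℕ} {x : K} :
    x ∈ upperCentralSeries K (n + 1) ↔ ∀ u : K, x⁻¹ * u⁻¹ * x * u ∈ upperCentralSeries K n := by
  rw [← inv_mem_iff, mem_upperCentralSeries_succ_iff, (Equiv.inv K).forall_congr_left]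
  simp [commutatorElement_def]

end Subgroup

open SemidirectProduct

section Operators

variable {R G : Type*} [Group R] [Group G] (φ : R →* MulAut G)

theorem opL_zero_s17 : opL φ 0 = {1} := by
  ext x
  simp [opL]

theorem mem_opL_succ_iff {n : ℕ} {x : G} :
    x ∈ opL φ (n + 1) ↔ ∀ r : R, opComm φ x r ∈ opL φ n := by
  constructor
  · intro h r l hl
    exact h (r :: l) (by simp [hl])
  · rintro h (_ | ⟨r, l⟩) hl
    · simp at hl
    · exact h r l (by simpa using hl)

variable {φ}

theorem SemidirectProduct.exists_conj_inl_eq (hInn : ∀ g : G, MulAut.conj g ∈ φ.range)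
    (u : G ⋊[φ] R) : ∃ r : R, ∀ y : G, u⁻¹ * inl y * u = inl (φ r y) := by
  obtain ⟨s, hs⟩ := hInn u.left
  refine ⟨u.right⁻¹ * s⁻¹, fun y => ?_⟩
  have hsy : (φ s)⁻¹ y = u.left⁻¹ * y * u.left := by
    rw [hs, MulAut.conj_inv_apply]
  ext
  · simp [MulAut.mul_apply, hsy, mul_assoc]
  · simp

theorem opL_eq_comap_upperCentralSeries (hInn : ∀ g : G, MulAut.conj g ∈ φ.range) (n : ℕ) :
    opL φ n = (Subgroup.upperCentralSeries (G ⋊[φ] R) n).comap inl := by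
  induction n with
  | zero =>
    ext x
    simp [opL_zero_s17, Subgroup.upperCentralSeries_zero, inl_injective.eq_iff' (map_one _)]
  | succ n ih =>
    ext x
    rw [mem_opL_succ_iff, SetLike.mem_coe, Subgroup.mem_comap,
      Subgroup.mem_upperCentralSeries_succ_iff_inv]
    simp only [ih, SetLike.mem_coe, Subgroup.mem_comap, opComm, map_mul, map_inv]
    constructor
    · intro h u
      obtain ⟨r, hr⟩ := exists_conj_inl_eq hInn u
      simpa [mul_assoc, hr] using h r
    · intro h r
      simpa [mul_assoc, inl_aut] using h (inr r⁻¹)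

end Operators

theorem opHypercenter_nilpotent_normal_general (R G : Type*) [Group R] [Group G] [Finite G]
    (φ : R →* MulAut G) (hInn : ∀ g : G, MulAut.conj g ∈ φ.range) :
    ∃ H : Subgroup G, H.Normal ∧ Group.IsNilpotent H ∧
      (H : Set G) = ⋃ n : ℕ, opL φ n := by
  let K : ℕ →o Subgroup G :=
    ⟨fun n => (Subgroup.upperCentralSeries (G ⋊[φ] R) n).comap inl,
      fun _ _ h => Subgroup.comap_mono (Subgroup.upperCentralSeries_mono _ h)⟩
  obtain ⟨N, hN⟩ := WellFoundedGT.monotone_chain_condition K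
  refine ⟨K N, inferInstanceAs ((Subgroup.upperCentralSeries _ N).comap inl).Normal, ?_, ?_⟩
  · exact Subgroup.isNilpotent_comap_upperCentralSeries inl_injective N
  · simp only [opL_eq_comap_upperCentralSeries hInn]
    refine subset_antisymm (Set.subset_iUnion_of_subset N le_rfl) (Set.iUnion_subset fun n => ?_)
    rcases le_total n N with h | h
    · exact K.mono h
    · exact (hN n h).ge

/-- Let `R` be a group of operators for a finite group `G` (acting via `φ : R →* Aut G`) such
that every inner automorphism of `G` lies in `φ(R)`. Then the absolute `R`-hypercenter
`L_∞(G, R) = ⋃ₙ Lₙ(G, R)` is a nilpotent normal subgroup of `G`. -/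
theorem opHypercenter_nilpotent_normal (R G : Type*) [Group R] [Group G] [Finite R] [Finite G]
    (φ : R →* MulAut G) (hInn : ∀ g : G, MulAut.conj g ∈ φ.range) :
    ∃ H : Subgroup G, H.Normal ∧ Group.IsNilpotent H ∧
      (H : Set G) = ⋃ n : ℕ, opL φ n :=
  opHypercenter_nilpotent_normal_general R G φ hInn
end
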